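/- arXiv:1406.1758 — 3 statements merged into one kernel-verified Lean document; each statement's English description precedes it below -/
import Mathlib

section
/- If S₁ and S₂ are non-isomorphic trees, each with at least 3 vertices, and n₀ = max(|S₁|, |S₂|), then there exists a decorated tree τ such that E[D_τ(T_{n₀}^{(S₁)})] ≠ E[D_τ(T_{n₀}^{(S₂)})]. -/
open Finset

noncomputable section

namespace LPAM

attribute [local instance] Classical.propDecidable

/-- The tree obtained from `G` by attaching a new vertex (the last element of `Fin (n+1)`)
to the vertex `v` of `G`. -/
def attach {n : ℕ} (G : SimpleGraph (Fin n)) (v : Fin n) : SimpleGraph (Fin (n + 1)) :=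
  SimpleGraph.fromRel fun a b =>
    (∃ a' b' : Fin n, a = a'.castSucc ∧ b = b'.castSucc ∧ G.Adj a' b') ∨
    (a = Fin.last n ∧ b = v.castSucc)

/-- The degree of a vertex. -/
def deg {n : ℕ} (G : SimpleGraph (Fin n)) (v : Fin n) : ℕ := (G.neighborSet v).ncard

/-- The law of the linear preferential attachment tree after `k` steps started from the
seed `S`: at each step, a new vertex is joined by an edge to a random vertex of the current
tree chosen with probability proportional to its degree. -/
def law {n₀ : ℕ} (S : SimpleGraph (Fin n₀)) : (k : ℕ) → SimpleGraph (Fin (n₀ + k)) → ℝ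
  | 0, G => if G = S then 1 else 0
  | (k + 1), G =>
      ∑ H : SimpleGraph (Fin (n₀ + k)), ∑ v : Fin (n₀ + k),
        law S k H * ((deg H v : ℝ) / (2 * (n₀ + k : ℕ) - 2)) *
          (if attach H v = G then 1 else 0)

/-- The law of the preferential attachment tree `T_n^{(S)}` with seed `S`, as a function on
graphs on `Fin n` (zero if `n < |S|`). -/
def lawAt {n₀ : ℕ} (S : SimpleGraph (Fin n₀)) (n : ℕ) (G : SimpleGraph (Fin n)) : ℝ :=
  if h : n₀ ≤ n then
    law S (n - n₀) (cast (congrArg (fun m => SimpleGraph (Fin m)) (Nat.add_sub_cancel' h).symm) G)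
  else 0

/-- A decorated tree: a finite tree together with a positive integer label on each vertex. -/
structure DecTree where
  n : ℕ
  graph : SimpleGraph (Fin n)
  isTree : graph.IsTree
  label : Fin n → ℕ
  label_pos : ∀ u, 0 < label u

/-- The weight of a decorated tree: the sum of its labels. -/
def DecTree.weight (τ : DecTree) : ℕ := ∑ u, τ.label u

/-- The strict partial order `≺` on decorated trees. -/
def DecTree.lt (τ' τ : DecTree) : Prop :=
  (τ'.weight < τ.weight ∧ τ'.n ≤ τ.n) ∨ (τ'.weight = τ.weight ∧ τ'.n < τ.n)

/-- The partial order `⪯` associated with `≺`. -/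
def DecTree.le (τ' τ : DecTree) : Prop := DecTree.lt τ' τ ∨ τ' = τ

/-- The observable `D_τ(T) = ∑_φ ∏_{u ∈ τ} [deg_T φ(u)]_{ℓ(u)}`, the sum running over all
embeddings (injective graph homomorphisms) `φ : τ → T`. -/
def Dval (τ : DecTree) {m : ℕ} (T : SimpleGraph (Fin m)) : ℝ :=
  ∑ φ : Fin τ.n → Fin m,
    if Function.Injective φ ∧ ∀ a b, τ.graph.Adj a b → T.Adj (φ a) (φ b) then
      ∏ u, ((deg T (φ u)).descFactorial (τ.label u) : ℝ)
    else 0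

/-- The expectation `E[D_τ(T_n^{(S)})]`. -/
def expD {n₀ : ℕ} (S : SimpleGraph (Fin n₀)) (τ : DecTree) (n : ℕ) : ℝ :=
  ∑ G : SimpleGraph (Fin n), lawAt S n G * Dval τ G

/-- `a ≪ b` : there are `c > 0` and `γ ∈ ℝ` with `|a_n| ≤ c (log n)^γ |b_n|` for `n` large. -/
def Lsim (a b : ℕ → ℝ) : Prop :=
  ∃ c γ : ℝ, 0 < c ∧ ∀ᶠ n : ℕ in Filter.atTop, |a n| ≤ c * Real.log n ^ γ * |b n|

end LPAM

/-!
When the seeds have the same size `n₀`, both expectations are the observables of the seeds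
themselves. Taking `τ = S₁` with all labels `1` gives `D_τ(S₁) > 0`, while `D_τ(S₂) = 0`: an
embedding of a tree into a tree with as many vertices and edges is an isomorphism.

Otherwise let `S₁` have `m + k` vertices and `S₂` have `m`, with `k ≥ 1`, and let `Δ₁`, `Δ₂` be
their maximal degrees. For the one-vertex tree with label `ℓ`, `D_τ(T) = ∑_v [deg_T v]_ℓ`. After
`k` steps from `S₂` every degree is at most `Δ₂ + k`, and no two vertices have degree sum larger
than `2 Δ₂ + k < 2 (Δ₂ + k)`; attaching all new vertices to one prescribed vertex has positive
probability. If `Δ₁ < Δ₂ + k`, take `ℓ = Δ₂ + k`: then `D_τ(S₁) = 0 < E[D_τ]`. Otherwise take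
`ℓ = Δ₁`: every tree in the support has `D_τ ≤ ℓ!`, and the one where everything is attached to a
leaf of `S₂` has `D_τ = 0` because `Δ₂ ≥ 2`, so `E[D_τ] < ℓ! ≤ D_τ(S₁)`.
-/

namespace LPAM

attribute [local instance] Classical.propDecidable

section Attach

variable {n : ℕ} (G : SimpleGraph (Fin n))

lemma deg_eq_degree (v : Fin n) : deg G v = G.degree v := by
  rw [deg, SimpleGraph.degree, SimpleGraph.neighborFinset, Set.ncard_eq_toFinset_card']

lemma deg_eq_sum_ite (v : Fin n) : deg G v = ∑ w, if G.Adj v w then 1 else 0 := by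
  rw [deg_eq_degree, ← SimpleGraph.card_neighborFinset_eq_degree, Finset.sum_boole,
    Nat.cast_id]
  congr 1
  ext w
  simp

variable (v : Fin n)

lemma attach_adj_castSucc_castSucc (a b : Fin n) :
    (attach G v).Adj a.castSucc b.castSucc ↔ G.Adj a b := by
  simp only [attach, SimpleGraph.fromRel_adj, Fin.castSucc_inj, Fin.castSucc_ne_last,
    false_and, or_false, exists_and_left, exists_eq_left', ne_eq]
  exact ⟨fun h => h.2.elim id G.adj_symm, fun h => ⟨G.ne_of_adj h, .inl h⟩⟩

lemma attach_adj_castSucc_last (a : Fin n) :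
    (attach G v).Adj a.castSucc (Fin.last n) ↔ a = v := by
  simp [attach, (Fin.castSucc_ne_last _).symm]

lemma deg_attach_castSucc (w : Fin n) :
    deg (attach G v) w.castSucc = deg G w + if w = v then 1 else 0 := by
  simp only [deg_eq_sum_ite, Fin.sum_univ_castSucc, attach_adj_castSucc_castSucc,
    attach_adj_castSucc_last]

lemma deg_attach_last : deg (attach G v) (Fin.last n) = 1 := by
  rw [deg_eq_sum_ite, Fin.sum_univ_castSucc]
  simp only [(attach G v).adj_comm (Fin.last n), attach_adj_castSucc_last, SimpleGraph.irrefl,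
    Finset.sum_ite_eq', Finset.mem_univ, if_true, if_false]

lemma sum_deg_attach : ∑ u, deg (attach G v) u = ∑ w, deg G w + 2 := by
  simp [Fin.sum_univ_castSucc, deg_attach_castSucc, deg_attach_last, Finset.sum_add_distrib]

variable {G} {c : ℕ}

lemma deg_attach_le_max (hc : ∀ w, deg G w ≤ c) (u : Fin (n + 1)) :
    deg (attach G v) u ≤ max (deg G v + 1) c := by
  induction u using Fin.lastCases with
  | last => rw [deg_attach_last]; omega
  | cast w =>
    rw [deg_attach_castSucc]
    have := hc w
    split_ifs with hw
    · subst hw; omega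
    · omega

lemma deg_attach_add_deg_attach_le {p : ℕ} (hc : ∀ w, deg G w ≤ c)
    (hp : ∀ {w w'}, w ≠ w' → deg G w + deg G w' ≤ p) (hcp : c + 1 ≤ p) {u u' : Fin (n + 1)}
    (huu' : u ≠ u') : deg (attach G v) u + deg (attach G v) u' ≤ p + 1 := by
  induction u using Fin.lastCases with
  | last =>
    induction u' using Fin.lastCases with
    | last => exact absurd rfl huu'
    | cast w' => rw [deg_attach_last, deg_attach_castSucc]; have := hc w'; split <;> omega
  | cast w =>
    induction u' using Fin.lastCases with
    | last => rw [deg_attach_last, deg_attach_castSucc]; have := hc w; split <;> omega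
    | cast w' =>
      have hww' : w ≠ w' := fun h => huu' (h ▸ rfl)
      rw [deg_attach_castSucc, deg_attach_castSucc]
      have := hp hww'
      split_ifs <;> omega

end Attach

section TreeDegrees

variable {n : ℕ} {G : SimpleGraph (Fin n)}

lemma deg_le_maxDegree (v : Fin n) : deg G v ≤ G.maxDegree :=
  deg_eq_degree G v ▸ G.degree_le_maxDegree v

lemma exists_deg_eq_maxDegree (hn : 1 ≤ n) : ∃ v, deg G v = G.maxDegree := by
  have : Nonempty (Fin n) := ⟨⟨0, hn⟩⟩
  obtain ⟨v, hv⟩ := G.exists_maximal_degree_vertex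
  exact ⟨v, by rw [deg_eq_degree, hv]⟩

lemma sum_deg_add_two_of_isTree (hG : G.IsTree) : ∑ v, deg G v + 2 = 2 * n := by
  have h := hG.card_edgeFinset
  rw [Fintype.card_fin] at h
  simp only [deg_eq_degree, G.sum_degrees_eq_twice_card_edges]
  omega

lemma deg_pos_of_isTree (hG : G.IsTree) (hn : 2 ≤ n) (v : Fin n) : 0 < deg G v := by
  have : Nontrivial (Fin n) := Fin.nontrivial_iff_two_le.mpr hn
  exact deg_eq_degree G v ▸ hG.connected.preconnected.degree_pos_of_nontrivial v

lemma exists_deg_eq_one_of_isTree (hG : G.IsTree) (hn : 2 ≤ n) : ∃ v, deg G v = 1 := by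
  have : Nontrivial (Fin n) := Fin.nontrivial_iff_two_le.mpr hn
  simpa [deg_eq_degree] using hG.exists_vert_degree_one_of_nontrivial

lemma two_le_maxDegree_of_isTree (hG : G.IsTree) (hn : 3 ≤ n) : 2 ≤ G.maxDegree := by
  by_contra! h
  have hle : ∑ v, deg G v ≤ ∑ _v : Fin n, 1 :=
    Finset.sum_le_sum fun v _ => by have := deg_le_maxDegree (G := G) v; omega
  have := sum_deg_add_two_of_isTree hG
  simp only [Finset.sum_const, Finset.card_univ, Fintype.card_fin, smul_eq_mul, mul_one] at hle
  omega

end TreeDegrees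

section Law

lemma two_mul_sub_two_pos {n : ℕ} (hn : 2 ≤ n) : (0 : ℝ) < 2 * n - 2 := by
  have : (2 : ℝ) ≤ n := by exact_mod_cast hn
  linarith

lemma deg_div_nonneg {n : ℕ} (H : SimpleGraph (Fin n)) (v : Fin n) :
    0 ≤ (deg H v : ℝ) / (2 * n - 2) := by
  have : (1 : ℝ) ≤ n := by exact_mod_cast v.pos
  exact div_nonneg (Nat.cast_nonneg _) (by linarith)

variable {m : ℕ} (S : SimpleGraph (Fin m))

lemma law_nonneg : ∀ k (G : SimpleGraph (Fin (m + k))), 0 ≤ law S k G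
  | 0, G => by rw [law]; positivity
  | k + 1, G => by
    rw [law]
    refine Finset.sum_nonneg fun H _ => Finset.sum_nonneg fun v _ => ?_
    have := law_nonneg k H
    have := deg_div_nonneg H v
    positivity

lemma sum_law_succ_mul (k : ℕ) (F : SimpleGraph (Fin (m + k + 1)) → ℝ) :
    ∑ G, law S (k + 1) G * F G =
      ∑ H, ∑ v, law S k H * ((deg H v : ℝ) / (2 * (m + k : ℕ) - 2)) * F (attach H v) := by
  simp only [law, Finset.sum_mul]
  rw [Finset.sum_comm]
  refine Finset.sum_congr rfl fun H _ => ?_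
  rw [Finset.sum_comm]
  simp [mul_ite, ite_mul, Finset.sum_ite_eq]

lemma exists_attach_eq_of_law_succ_ne_zero {k : ℕ} {G : SimpleGraph (Fin (m + k + 1))}
    (h : law S (k + 1) G ≠ 0) : ∃ H v, law S k H ≠ 0 ∧ attach H v = G := by
  rw [law] at h
  obtain ⟨H, -, hH⟩ := Finset.exists_ne_zero_of_sum_ne_zero h
  obtain ⟨v, -, hv⟩ := Finset.exists_ne_zero_of_sum_ne_zero hH
  exact ⟨H, v, fun h0 => hv (by simp [h0]), by_contra fun hne => hv (by simp [hne])⟩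

lemma sum_deg_of_law_ne_zero :
    ∀ {k} {G : SimpleGraph (Fin (m + k))}, law S k G ≠ 0 →
      ∑ v, deg G v = ∑ v, deg S v + 2 * k
  | 0, G, h => by
    rw [law, ite_ne_right_iff] at h
    obtain ⟨rfl, -⟩ := h
    rfl
  | k + 1, G, h => by
    obtain ⟨H, v, hH, rfl⟩ := exists_attach_eq_of_law_succ_ne_zero S h
    change ∑ u : Fin (m + k + 1), _ = _
    rw [sum_deg_attach, sum_deg_of_law_ne_zero hH]
    ring

lemma deg_le_of_law_ne_zero :
    ∀ {k} {G : SimpleGraph (Fin (m + k))}, law S k G ≠ 0 → ∀ u, deg G u ≤ S.maxDegree + k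
  | 0, G, h, u => by
    rw [law, ite_ne_right_iff] at h
    obtain ⟨rfl, -⟩ := h
    exact deg_le_maxDegree u
  | k + 1, G, h, u => by
    obtain ⟨H, v, hH, rfl⟩ := exists_attach_eq_of_law_succ_ne_zero S h
    have ih := deg_le_of_law_ne_zero hH
    exact (deg_attach_le_max v ih u).trans (max_le (by have := ih v; omega) (by omega))

lemma deg_add_deg_le_of_law_ne_zero (hS : 1 ≤ S.maxDegree) :
    ∀ {k} {G : SimpleGraph (Fin (m + k))}, law S k G ≠ 0 →
      ∀ {u u'}, u ≠ u' → deg G u + deg G u' ≤ 2 * S.maxDegree + k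
  | 0, G, h, u, u', _ => by
    rw [law, ite_ne_right_iff] at h
    obtain ⟨rfl, -⟩ := h
    have := deg_le_maxDegree (G := G) u
    have := deg_le_maxDegree (G := G) u'
    omega
  | k + 1, G, h, u, u', huu' => by
    obtain ⟨H, v, hH, rfl⟩ := exists_attach_eq_of_law_succ_ne_zero S h
    exact deg_attach_add_deg_attach_le (p := 2 * S.maxDegree + k) v (deg_le_of_law_ne_zero S hH)
      (deg_add_deg_le_of_law_ne_zero hS hH) (by omega) huu'

lemma sum_law (hS : S.IsTree) (hm : 2 ≤ m) : ∀ k, ∑ G, law S k G = 1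
  | 0 => by simp [law]
  | k + 1 => by
    have hmass : ∀ H, ∑ v, law S k H * ((deg H v : ℝ) / (2 * (m + k : ℕ) - 2)) = law S k H := by
      intro H
      by_cases hH : law S k H = 0
      · simp [hH]
      have hsum : ((∑ v, deg H v : ℕ) : ℝ) = 2 * (m + k : ℕ) - 2 := by
        have := sum_deg_add_two_of_isTree hS
        have hN : ∑ v, deg H v + 2 = 2 * (m + k) := by rw [sum_deg_of_law_ne_zero S hH]; omega
        rw [eq_sub_iff_add_eq]
        exact_mod_cast hN
      rw [← Finset.mul_sum, ← Finset.sum_div, ← Nat.cast_sum, hsum,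
        div_self (two_mul_sub_two_pos (by omega)).ne', mul_one]
    calc ∑ G, law S (k + 1) G = ∑ G, law S (k + 1) G * 1 := by simp only [mul_one]
      _ = ∑ H, law S k H :=
        (sum_law_succ_mul S k fun _ => 1).trans (by simp only [mul_one, hmass])
      _ = 1 := sum_law hS hm k

lemma law_succ_attach_pos (hm : 2 ≤ m) {k : ℕ} {H : SimpleGraph (Fin (m + k))} {v : Fin (m + k)}
    (hH : 0 < law S k H) (hv : 0 < deg H v) : 0 < law S (k + 1) (attach H v) := by
  rw [law]
  have hterm : ∀ H' v', 0 ≤ law S k H' * ((deg H' v' : ℝ) / (2 * (m + k : ℕ) - 2)) *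
      if attach H' v' = attach H v then 1 else 0 := fun H' v' => by
    have := law_nonneg S k H'
    have := deg_div_nonneg H' v'
    positivity
  refine Finset.sum_pos' (fun H' _ => Finset.sum_nonneg fun v' _ => hterm H' v')
    ⟨H, Finset.mem_univ _, Finset.sum_pos' (fun v' _ => hterm H v') ⟨v, Finset.mem_univ _, ?_⟩⟩
  rw [if_pos rfl, mul_one]
  exact mul_pos hH (div_pos (by exact_mod_cast hv) (two_mul_sub_two_pos (by omega)))

end Law

section AttachIter

variable {m : ℕ} (S : SimpleGraph (Fin m)) (u : Fin m)

def attachIter : (k : ℕ) → SimpleGraph (Fin (m + k))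
  | 0 => S
  | k + 1 => attach (attachIter k) (Fin.castAdd k u)

lemma deg_attachIter_self : ∀ k, deg (attachIter S u k) (Fin.castAdd k u) = deg S u + k
  | 0 => rfl
  | k + 1 => by
    rw [attachIter, ← Fin.castSucc_castAdd, deg_attach_castSucc, if_pos rfl,
      deg_attachIter_self k]
    rfl

lemma deg_attachIter_le : ∀ k x, deg (attachIter S u k) x ≤ max (deg S u + k) S.maxDegree
  | 0, x => (deg_le_maxDegree x).trans (le_max_right _ _)
  | k + 1, x => by
    refine (deg_attach_le_max _ (deg_attachIter_le k) x).trans ?_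
    rw [deg_attachIter_self]
    omega

lemma law_attachIter_pos (hm : 2 ≤ m) (hu : 0 < deg S u) : ∀ k, 0 < law S k (attachIter S u k)
  | 0 => by simp [attachIter, law]
  | k + 1 => law_succ_attach_pos S hm (law_attachIter_pos hm hu k)
      (by rw [deg_attachIter_self]; omega)

end AttachIter

section Expectation

variable {m : ℕ} (S : SimpleGraph (Fin m))

lemma lawAt_add (k : ℕ) (G : SimpleGraph (Fin (m + k))) : lawAt S (m + k) G = law S k G := by
  have key : ∀ j (_ : k = j) (e : SimpleGraph (Fin (m + k)) = SimpleGraph (Fin (m + j))),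
      law S j (cast e G) = law S k G := by
    rintro _ rfl e
    rfl
  rw [lawAt, dif_pos (Nat.le_add_right m k)]
  exact key _ (by omega) _

lemma expD_add (τ : DecTree) (k : ℕ) : expD S τ (m + k) = ∑ G, law S k G * Dval τ G := by
  simp only [expD, lawAt_add]

lemma expD_self (τ : DecTree) : expD S τ m = Dval τ S :=
  (expD_add S τ 0).trans (by simp [law])

variable {k : ℕ} {F : SimpleGraph (Fin (m + k)) → ℝ}

lemma sum_law_mul_pos (hF : ∀ G, 0 ≤ F G) {G₀ : SimpleGraph (Fin (m + k))}
    (hG₀ : 0 < law S k G₀) (hFG₀ : 0 < F G₀) : 0 < ∑ G, law S k G * F G :=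
  Finset.sum_pos' (fun G _ => mul_nonneg (law_nonneg S k G) (hF G))
    ⟨G₀, Finset.mem_univ _, mul_pos hG₀ hFG₀⟩

lemma sum_law_mul_lt (hS : S.IsTree) (hm : 2 ≤ m) {c : ℝ} (hF : ∀ G, law S k G ≠ 0 → F G ≤ c)
    {G₀ : SimpleGraph (Fin (m + k))} (hG₀ : 0 < law S k G₀) (hFG₀ : F G₀ < c) :
    ∑ G, law S k G * F G < c := by
  calc ∑ G, law S k G * F G < ∑ G, law S k G * c := by
        refine Finset.sum_lt_sum (fun G _ => ?_) ⟨G₀, Finset.mem_univ _, by gcongr⟩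
        by_cases hG : law S k G = 0
        · simp [hG]
        · exact mul_le_mul_of_nonneg_left (hF G hG) (law_nonneg S k G)
    _ = c := by rw [← Finset.sum_mul, sum_law S hS hm, one_mul]

end Expectation

section PointTree

def pointTree (ℓ : ℕ) (hℓ : 0 < ℓ) : DecTree :=
  ⟨1, ⊥, .of_subsingleton, fun _ => ℓ, fun _ => hℓ⟩

lemma Dval_pointTree (ℓ : ℕ) (hℓ : 0 < ℓ) {n : ℕ} (T : SimpleGraph (Fin n)) :
    Dval (pointTree ℓ hℓ) T = ((∑ v, (deg T v).descFactorial ℓ : ℕ) : ℝ) := by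
  rw [Dval, Nat.cast_sum]
  refine Fintype.sum_equiv (Equiv.funUnique (Fin 1) (Fin n)) _ _ fun φ => ?_
  rw [if_pos ⟨Function.injective_of_subsingleton φ, fun a b h => (h : False).elim⟩]
  simp only [pointTree]
  exact Fin.prod_univ_one _

variable {ι : Type*} [Fintype ι] {d : ι → ℕ} {ℓ : ℕ}

lemma sum_descFactorial_eq_zero (hd : ∀ i, d i < ℓ) : ∑ i, (d i).descFactorial ℓ = 0 :=
  Finset.sum_eq_zero fun i _ => Nat.descFactorial_eq_zero_iff_lt.mpr (hd i)

lemma factorial_le_sum_descFactorial {i : ι} (hi : d i = ℓ) :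
    ℓ.factorial ≤ ∑ i, (d i).descFactorial ℓ := by
  rw [← Nat.descFactorial_self, ← hi]
  exact Finset.single_le_sum (f := fun j => (d j).descFactorial (d i)) (fun _ _ => Nat.zero_le _)
    (Finset.mem_univ i)

lemma sum_descFactorial_pos {i : ι} (hi : ℓ ≤ d i) : 0 < ∑ i, (d i).descFactorial ℓ :=
  Finset.sum_pos' (fun _ _ => Nat.zero_le _)
    ⟨i, Finset.mem_univ i, Nat.descFactorial_pos.mpr hi⟩

lemma sum_descFactorial_le_factorial (hd : ∀ i, d i ≤ ℓ)
    (hd₂ : ∀ {i j}, i ≠ j → d i + d j < 2 * ℓ) : ∑ i, (d i).descFactorial ℓ ≤ ℓ.factorial := by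
  by_cases h : ∃ i, d i = ℓ
  · obtain ⟨i, hi⟩ := h
    rw [Finset.sum_eq_single_of_mem i (Finset.mem_univ i) fun j _ hji => ?_, hi,
      Nat.descFactorial_self]
    have := hd₂ hji
    exact Nat.descFactorial_eq_zero_iff_lt.mpr (by omega)
  · push Not at h
    rw [sum_descFactorial_eq_zero fun i => (hd i).lt_of_ne (h i)]
    exact Nat.zero_le _

end PointTree

section SameSize

lemma nonempty_iso_of_copy {V W : Type*} [Fintype V] [Fintype W] {G : SimpleGraph V}
    {H : SimpleGraph W} (f : G.Copy H) (hV : Fintype.card V = Fintype.card W)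
    (hE : G.edgeFinset.card = H.edgeFinset.card) : Nonempty (G ≃g H) := by
  let e := Equiv.ofBijective f ((Fintype.bijective_iff_injective_and_card f).mpr ⟨f.injective, hV⟩)
  have hle : G.map e ≤ H := by
    rintro _ _ ⟨-, a, b, hab, rfl, rfl⟩
    exact f.toHom.map_adj hab
  have heq : G.map e = H := by
    rw [← SimpleGraph.edgeFinset_inj]
    refine Finset.eq_of_subset_of_card_le (SimpleGraph.edgeFinset_mono hle) ?_
    rw [← hE, (SimpleGraph.Iso.map e G).card_edgeFinset_eq]
  exact ⟨heq ▸ SimpleGraph.Iso.map e G⟩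

def unitLabelTree {n : ℕ} (G : SimpleGraph (Fin n)) (hG : G.IsTree) : DecTree :=
  ⟨n, G, hG, fun _ => 1, fun _ => one_pos⟩

variable {n : ℕ} {G : SimpleGraph (Fin n)} (hG : G.IsTree)

lemma Dval_unitLabelTree_self_pos (hn : 2 ≤ n) : 0 < Dval (unitLabelTree G hG) G := by
  refine Finset.sum_pos' (fun φ _ => ?_) ⟨id, Finset.mem_univ _, ?_⟩
  · split_ifs
    · positivity
    · exact le_rfl
  · rw [if_pos ⟨Function.injective_id, fun _ _ h => h⟩]
    refine Finset.prod_pos fun u _ => ?_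
    simp only [unitLabelTree, Nat.descFactorial_one]
    exact_mod_cast deg_pos_of_isTree hG hn u

lemma Dval_unitLabelTree_eq_zero {H : SimpleGraph (Fin n)} (hH : H.IsTree)
    (hiso : ¬ Nonempty (G ≃g H)) : Dval (unitLabelTree G hG) H = 0 := by
  refine Finset.sum_eq_zero fun φ _ => if_neg ?_
  rintro ⟨hinj, hadj⟩
  refine hiso (nonempty_iso_of_copy ⟨⟨φ, hadj _ _⟩, hinj⟩ rfl ?_)
  have := hG.card_edgeFinset
  have := hH.card_edgeFinset
  simp only [Fintype.card_fin] at *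
  omega

end SameSize

section Distinguish

variable {m k : ℕ} {S : SimpleGraph (Fin m)}

lemma sum_law_mul_Dval_pointTree_pos (hS : S.IsTree) (hm : 2 ≤ m) {ℓ : ℕ} (hℓ : 0 < ℓ)
    (hℓk : ℓ ≤ S.maxDegree + k) : 0 < ∑ G, law S k G * Dval (pointTree ℓ hℓ) G := by
  obtain ⟨u, hu⟩ := exists_deg_eq_maxDegree (G := S) (by omega)
  refine sum_law_mul_pos S (fun G => by rw [Dval_pointTree]; positivity)
    (law_attachIter_pos S u hm (deg_pos_of_isTree hS hm u) k) ?_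
  rw [Dval_pointTree, Nat.cast_pos]
  exact sum_descFactorial_pos (i := Fin.castAdd k u) (by rw [deg_attachIter_self]; omega)

lemma sum_law_mul_Dval_pointTree_lt_factorial (hS : S.IsTree) (hm : 3 ≤ m) (hk : 1 ≤ k)
    {ℓ : ℕ} (hℓ : 0 < ℓ) (hℓk : S.maxDegree + k ≤ ℓ) :
    ∑ G, law S k G * Dval (pointTree ℓ hℓ) G < ℓ.factorial := by
  have hΔ := two_le_maxDegree_of_isTree hS hm
  obtain ⟨u, hu⟩ := exists_deg_eq_one_of_isTree hS (by omega)
  refine sum_law_mul_lt S hS (by omega) (fun G hG => ?_)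
    (law_attachIter_pos S u (by omega) (by omega) k) ?_
  · rw [Dval_pointTree, Nat.cast_le]
    refine sum_descFactorial_le_factorial (fun v => ?_) fun huv => ?_
    · have := deg_le_of_law_ne_zero S hG v
      omega
    · have := deg_add_deg_le_of_law_ne_zero S (by omega) hG huv
      omega
  · rw [Dval_pointTree, sum_descFactorial_eq_zero fun v => ?_, Nat.cast_zero, Nat.cast_pos]
    · exact Nat.factorial_pos ℓ
    · have := deg_attachIter_le S u k v
      omega

lemma exists_expD_add_ne (T : SimpleGraph (Fin (m + k))) (hS : S.IsTree) (hm : 3 ≤ m)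
    (hk : 1 ≤ k) : ∃ τ, expD T τ (m + k) ≠ expD S τ (m + k) := by
  simp only [expD_self, expD_add]
  rcases lt_or_ge T.maxDegree (S.maxDegree + k) with hlt | hge
  · refine ⟨pointTree (S.maxDegree + k) (by omega), ne_of_lt ?_⟩
    rw [Dval_pointTree, sum_descFactorial_eq_zero fun v => (deg_le_maxDegree v).trans_lt hlt,
      Nat.cast_zero]
    exact sum_law_mul_Dval_pointTree_pos hS (by omega) _ le_rfl
  · obtain ⟨v, hv⟩ := exists_deg_eq_maxDegree (G := T) (by omega)
    refine ⟨pointTree T.maxDegree (by omega), ne_of_gt ?_⟩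
    refine (sum_law_mul_Dval_pointTree_lt_factorial hS hm hk _ hge).trans_le ?_
    rw [Dval_pointTree, Nat.cast_le]
    exact factorial_le_sum_descFactorial hv

end Distinguish

/-- If `S₁` and `S₂` are non-isomorphic trees, each with at least 3 vertices, and
`n₀ = max(|S₁|, |S₂|)`, then there exists a decorated tree `τ` such that
`E[D_τ(T_{n₀}^{(S₁)})] ≠ E[D_τ(T_{n₀}^{(S₂)})]`. -/
theorem exists_distinguishing_decorated_tree
    {m₁ m₂ : ℕ} (S₁ : SimpleGraph (Fin m₁)) (S₂ : SimpleGraph (Fin m₂))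
    (h₁ : S₁.IsTree) (h₂ : S₂.IsTree) (hm₁ : 3 ≤ m₁) (hm₂ : 3 ≤ m₂)
    (hiso : ¬ Nonempty (S₁ ≃g S₂)) :
    ∃ τ : DecTree, expD S₁ τ (max m₁ m₂) ≠ expD S₂ τ (max m₁ m₂) := by
  rcases lt_trichotomy m₁ m₂ with hlt | rfl | hgt
  · obtain ⟨k, rfl⟩ := Nat.exists_eq_add_of_le hlt.le
    rw [max_eq_right hlt.le]
    obtain ⟨τ, hτ⟩ := exists_expD_add_ne S₂ h₁ hm₁ (by omega)
    exact ⟨τ, hτ.symm⟩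
  · refine ⟨unitLabelTree S₁ h₁, ?_⟩
    rw [max_self, expD_self, expD_self, Dval_unitLabelTree_eq_zero h₁ h₂ hiso]
    exact (Dval_unitLabelTree_self_pos h₁ (by omega)).ne'
  · obtain ⟨k, rfl⟩ := Nat.exists_eq_add_of_le hgt.le
    rw [max_eq_left hgt.le]
    exact exists_expD_add_ne S₁ h₂ hm₂ (by omega)

end LPAM
end
end

section
/- Let a > 0, C > 0, γ ≥ 0 be reals and n₀ ≥ 2 an integer, and let (x_n)_{n ≥ n₀} be a sequence of nonnegative reals satisfying x_{n+1} ≤ (1 + a/(2n−2)) · x_n + C · (log n)^γ · n^{a/2 − 1} for all n ≥ n₀. Then there exist constants c > 0 and γ' ∈ ℝ such that x_n ≤ c · (log n)^{γ'} · n^{a/2} for all n large enough. -/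
/-!
The profile `f n = (log n)^(γ+1) * n^(a/2)` is a supersolution: as soon as `a log n ≤ (n - 1)/2`,
`f (n+1) ≥ (1 + a/(2n-2)) f n + (log n)^γ n^(a/2-1) / 4`. The extra factor `log n` makes `f` grow
by an additional `≈ f n / (n log n)` per step, which absorbs both the forcing term and the excess
`a/(2n-2) - a/(2n) ≈ a/n²` of the coefficient over the growth rate of `n^(a/2)`. Hence `K f` with
`K ≥ 4C` large enough at the starting index dominates `x` by induction.
-/

open Real Filter

lemma Real.log_add_inv_add_one_le_log_add_one {t : ℝ} (ht : 0 < t) :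
    log t + (t + 1)⁻¹ ≤ log (t + 1) := by
  have h := one_sub_inv_le_log_of_pos (show 0 < (t + 1) / t by positivity)
  rw [log_div (by positivity) ht.ne', inv_div] at h
  have : 1 - t / (t + 1) = (t + 1)⁻¹ := by field_simp; ring
  linarith

lemma Real.one_add_mul_inv_add_one_mul_rpow_le {t p : ℝ} (ht : 0 < t) (hp : 0 ≤ p) :
    (1 + p * (t + 1)⁻¹) * t ^ p ≤ (t + 1) ^ p := by
  rw [rpow_def_of_pos ht, rpow_def_of_pos (by positivity), mul_comm (1 + _)]
  calc exp (log t * p) * (1 + p * (t + 1)⁻¹)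
      ≤ exp (log t * p) * exp (p * (t + 1)⁻¹) := by
        gcongr; linarith [add_one_le_exp (p * (t + 1)⁻¹)]
    _ = exp ((log t + (t + 1)⁻¹) * p) := by rw [← exp_add]; ring_nf
    _ ≤ exp (log (t + 1) * p) := by
        gcongr; exact log_add_inv_add_one_le_log_add_one ht

lemma eventually_mul_log_le_sub_one_div_two (a : ℝ) :
    ∀ᶠ t : ℝ in atTop, a * log t ≤ (t - 1) / 2 := by
  filter_upwards [(isLittleO_log_id_atTop.const_mul_left a).bound (show (0 : ℝ) < 1 / 4 by norm_num),
    eventually_ge_atTop 2] with t hbound ht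
  rw [norm_eq_abs, norm_eq_abs, id, abs_of_nonneg (by linarith : (0 : ℝ) ≤ t)] at hbound
  linarith [le_abs_self (a * log t)]

/-- The supersolution inequality divided by `(log t)^γ * t^(a/2)`, with `L` in place of `log t`. -/
lemma one_add_div_mul_add_inv_le_mul_one_add {a t L : ℝ} (ha : 0 ≤ a) (ht : 1 < t)
    (haL : a * L ≤ (t - 1) / 2) :
    (1 + a / (2 * t - 2)) * L + (4 * t)⁻¹ ≤ (L + (t + 1)⁻¹) * (1 + a / 2 * (t + 1)⁻¹) := by
  have ht₁ : 0 < t - 1 := by linarith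
  have hexpand : (L + (t + 1)⁻¹) * (1 + a / 2 * (t + 1)⁻¹) - (1 + a / (2 * t - 2)) * L
      = (t + 1)⁻¹ - a * L / ((t - 1) * (t + 1)) + a / 2 * ((t + 1)⁻¹) ^ 2 := by
    field_simp
    ring
  have hlog : a * L / ((t - 1) * (t + 1)) ≤ (2 * (t + 1))⁻¹ := by
    rw [div_le_iff₀ (by positivity)]
    field_simp
    nlinarith
  have hinv : (4 * t)⁻¹ ≤ (2 * (t + 1))⁻¹ := inv_anti₀ (by positivity) (by linarith)
  have hhalf : (2 * (t + 1))⁻¹ + (2 * (t + 1))⁻¹ = (t + 1)⁻¹ := by field_simp; ring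
  nlinarith [sq_nonneg (t + 1)⁻¹]

lemma log_rpow_mul_rpow_supersolution {a γ t : ℝ} (ha : 0 ≤ a) (hγ : 0 ≤ γ) (ht : 1 < t)
    (haL : a * log t ≤ (t - 1) / 2) :
    (1 + a / (2 * t - 2)) * (log t ^ (γ + 1) * t ^ (a / 2)) + log t ^ γ * t ^ (a / 2 - 1) / 4
      ≤ log (t + 1) ^ (γ + 1) * (t + 1) ^ (a / 2) := by
  have ht₀ : 0 < t := by linarith
  have hL : 0 < log t := log_pos ht
  have hL' : log t + (t + 1)⁻¹ ≤ log (t + 1) := log_add_inv_add_one_le_log_add_one ht₀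
  have hu : 0 < (t + 1)⁻¹ := by positivity
  have hLγ : 0 ≤ log t ^ γ := rpow_nonneg hL.le γ
  have hlog : (log t + (t + 1)⁻¹) * log t ^ γ ≤ log (t + 1) ^ (γ + 1) := by
    rw [rpow_add_one (by linarith) γ, mul_comm _ (log _)]
    exact mul_le_mul hL' (rpow_le_rpow hL.le (by linarith) hγ) hLγ (by linarith)
  calc (1 + a / (2 * t - 2)) * (log t ^ (γ + 1) * t ^ (a / 2)) + log t ^ γ * t ^ (a / 2 - 1) / 4
      = ((1 + a / (2 * t - 2)) * log t + (4 * t)⁻¹) * (log t ^ γ * t ^ (a / 2)) := by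
        rw [rpow_add_one hL.ne', rpow_sub_one ht₀.ne']
        field_simp
    _ ≤ (log t + (t + 1)⁻¹) * (1 + a / 2 * (t + 1)⁻¹) * (log t ^ γ * t ^ (a / 2)) := by
        gcongr
        exact one_add_div_mul_add_inv_le_mul_one_add ha ht haL
    _ = (log t + (t + 1)⁻¹) * log t ^ γ * ((1 + a / 2 * (t + 1)⁻¹) * t ^ (a / 2)) := by ring
    _ ≤ log (t + 1) ^ (γ + 1) * (t + 1) ^ (a / 2) :=
        mul_le_mul hlog (one_add_mul_inv_add_one_mul_rpow_le ht₀ (by positivity)) (by positivity)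
          (rpow_nonneg (by linarith) _)

lemma const_mul_log_rpow_mul_rpow_supersolution {a C K γ t : ℝ} (ha : 0 ≤ a) (hC : 0 ≤ C)
    (hγ : 0 ≤ γ) (hK : 4 * C ≤ K) (ht : 1 < t) (haL : a * log t ≤ (t - 1) / 2) :
    (1 + a / (2 * t - 2)) * (K * (log t ^ (γ + 1) * t ^ (a / 2))) + C * log t ^ γ * t ^ (a / 2 - 1)
      ≤ K * (log (t + 1) ^ (γ + 1) * (t + 1) ^ (a / 2)) := by
  have hg : 0 ≤ log t ^ γ * t ^ (a / 2 - 1) :=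
    mul_nonneg (rpow_nonneg (log_nonneg ht.le) _) (rpow_nonneg (by linarith) _)
  calc (1 + a / (2 * t - 2)) * (K * (log t ^ (γ + 1) * t ^ (a / 2)))
        + C * log t ^ γ * t ^ (a / 2 - 1)
      ≤ K * ((1 + a / (2 * t - 2)) * (log t ^ (γ + 1) * t ^ (a / 2))
        + log t ^ γ * t ^ (a / 2 - 1) / 4) := by nlinarith
    _ ≤ K * (log (t + 1) ^ (γ + 1) * (t + 1) ^ (a / 2)) := by
        gcongr
        · linarith
        · exact log_rpow_mul_rpow_supersolution ha hγ ht haL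

lemma le_of_subsolution_of_supersolution {r b x y : ℕ → ℝ} {N : ℕ} (hr : ∀ n ≥ N, 0 ≤ r n)
    (hx : ∀ n ≥ N, x (n + 1) ≤ r n * x n + b n) (hy : ∀ n ≥ N, r n * y n + b n ≤ y (n + 1))
    (hN : x N ≤ y N) : ∀ n ≥ N, x n ≤ y n := by
  intro n hn
  induction n, hn using Nat.le_induction with
  | base => exact hN
  | succ n hn ih =>
    calc x (n + 1) ≤ r n * x n + b n := hx n hn
      _ ≤ r n * y n + b n := by gcongr; exact hr n hn
      _ ≤ y (n + 1) := hy n hn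

theorem recursive_bound_growth_general (a C γ : ℝ) (ha : 0 < a) (hC : 0 < C) (hγ : 0 ≤ γ)
    (n₀ : ℕ) (x : ℕ → ℝ)
    (hrec : ∀ n, n₀ ≤ n →
      x (n + 1) ≤ (1 + a / (2 * (n : ℝ) - 2)) * x n
        + C * Real.log n ^ γ * (n : ℝ) ^ (a / 2 - 1)) :
    ∃ c γ' : ℝ, 0 < c ∧
      ∀ᶠ n : ℕ in Filter.atTop, x n ≤ c * Real.log n ^ γ' * (n : ℝ) ^ (a / 2) := by
  obtain ⟨N, hN⟩ := eventually_atTop.mp <|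
    (eventually_ge_atTop n₀).and <| (eventually_ge_atTop 2).and <|
      tendsto_natCast_atTop_atTop.eventually (eventually_mul_log_le_sub_one_div_two a)
  set f : ℕ → ℝ := fun n ↦ log n ^ (γ + 1) * (n : ℝ) ^ (a / 2)
  have hN_one : ∀ n ≥ N, (1 : ℝ) < n := fun n hn ↦ by exact_mod_cast (hN n hn).2.1
  have hfN : 0 < f N := mul_pos (rpow_pos_of_pos (log_pos (hN_one N le_rfl)) _)
    (rpow_pos_of_pos (by linarith [hN_one N le_rfl]) _)
  set K := max (4 * C) (x N / f N)
  have hsuper : ∀ n ≥ N, (1 + a / (2 * (n : ℝ) - 2)) * (K * f n)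
      + C * log n ^ γ * (n : ℝ) ^ (a / 2 - 1) ≤ K * f (n + 1) := fun n hn ↦ by
    simp only [f]
    push_cast
    exact const_mul_log_rpow_mul_rpow_supersolution ha.le hC.le hγ (le_max_left _ _) (hN_one n hn)
      (hN n hn).2.2
  have hbound : ∀ n ≥ N, x n ≤ K * f n :=
    le_of_subsolution_of_supersolution
      (fun n hn ↦ add_nonneg zero_le_one (div_nonneg ha.le (by linarith [hN_one n hn])))
      (fun n hn ↦ hrec n (hN n hn).1) hsuper ((div_le_iff₀ hfN).mp (le_max_right _ _))
  exact ⟨K, γ + 1, lt_max_of_lt_left (by positivity),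
    eventually_atTop.2 ⟨N, fun n hn ↦ (hbound n hn).trans_eq (mul_assoc _ _ _).symm⟩⟩

/-- Let `a > 0`, `C > 0`, `γ ≥ 0` be reals and `n₀ ≥ 2` an integer, and let `(x_n)_{n ≥ n₀}` be a
sequence of nonnegative reals satisfying
`x_{n+1} ≤ (1 + a/(2n−2)) · x_n + C · (log n)^γ · n^{a/2 − 1}` for all `n ≥ n₀`. Then there exist
constants `c > 0` and `γ' ∈ ℝ` such that `x_n ≤ c · (log n)^{γ'} · n^{a/2}` for all `n` large
enough. -/
theorem recursive_bound_growth (a C γ : ℝ) (ha : 0 < a) (hC : 0 < C) (hγ : 0 ≤ γ)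
    (n₀ : ℕ) (hn₀ : 2 ≤ n₀) (x : ℕ → ℝ)
    (hx0 : ∀ n, n₀ ≤ n → 0 ≤ x n)
    (hrec : ∀ n, n₀ ≤ n →
      x (n + 1) ≤ (1 + a / (2 * (n : ℝ) - 2)) * x n
        + C * Real.log n ^ γ * (n : ℝ) ^ (a / 2 - 1)) :
    ∃ c γ' : ℝ, 0 < c ∧
      ∀ᶠ n : ℕ in Filter.atTop, x n ≤ c * Real.log n ^ γ' * (n : ℝ) ^ (a / 2) :=
  recursive_bound_growth_general a C γ ha hC hγ n₀ x hrec
end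

section
/- Let S be a finite tree and let τ be the decorated tree whose underlying tree is S and whose label at each vertex u is ℓ(u) = deg_S(u). Then D_τ(S) > 0, and for every finite tree T with |T| = |S| that is not isomorphic to S, D_τ(T) = 0. Consequently, for every tree T with |T| = |S|, D_τ(T) = D_τ(S) · 1_{{T ≅ S}}. -/
/-! An injective homomorphism between two trees on the same finite vertex type is bijective and
maps the `n - 1` edges of the source injectively into the `n - 1` edges of the target, hence it is
an isomorphism. So `S` embeds into a tree `T` of the same order only if `T ≅ S`, and then
`D_τ(T) = D_τ(S)`; the identity embedding contributes `∏ᵤ deg_S(u)! > 0` to `D_τ(S)`. -/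

open Finset

noncomputable section

namespace LPAM

attribute [local instance] Classical.propDecidable

/-- The observable `D_{(σ,ℓ)}(T) = ∑_φ ∏_{u ∈ σ} [deg_T φ(u)]_{ℓ(u)}`, the sum running over all
embeddings (injective graph homomorphisms) `φ : σ → T`, for a tree `σ` decorated by the labels
`ℓ`. -/
def DvalR {k m : ℕ} (σ : SimpleGraph (Fin k)) (ℓ : Fin k → ℕ) (T : SimpleGraph (Fin m)) : ℝ :=
  ∑ φ : Fin k → Fin m,
    if Function.Injective φ ∧ ∀ a b, σ.Adj a b → T.Adj (φ a) (φ b) then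
      ∏ u, ((deg T (φ u)).descFactorial (ℓ u) : ℝ)
    else 0

lemma deg_iso {n : ℕ} {G H : SimpleGraph (Fin n)} (ψ : G ≃g H) (v : Fin n) :
    deg H (ψ v) = deg G v := by
  unfold deg
  rw [← Nat.card_coe_set_eq, ← Nat.card_coe_set_eq]
  exact (Nat.card_congr (ψ.mapNeighborSet v)).symm

theorem _root_.SimpleGraph.nonempty_iso_of_bijective_of_card_edgeFinset_eq {V W : Type*}
    [Fintype V] [Fintype W] [DecidableEq W] {G : SimpleGraph V} {H : SimpleGraph W}
    [DecidableRel G.Adj] [DecidableRel H.Adj] (f : G →g H) (hf : Function.Bijective f)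
    (hcard : #G.edgeFinset = #H.edgeFinset) : Nonempty (G ≃g H) := by
  let e := Equiv.ofBijective f hf
  have hle : G.map e.toEmbedding ≤ H :=
    (SimpleGraph.map_le_iff_le_comap _ _ _).2 fun _ _ h => f.map_adj h
  have hmap : G.map e.toEmbedding = H := by
    rw [← SimpleGraph.edgeFinset_inj]
    refine eq_of_subset_of_card_le (SimpleGraph.edgeFinset_mono hle) ?_
    rw [SimpleGraph.card_edgeFinset_map, hcard]
  exact ⟨hmap ▸ SimpleGraph.Iso.map e G⟩

theorem _root_.SimpleGraph.IsTree.nonempty_iso_of_injective {V : Type*} [Finite V]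
    {S T : SimpleGraph V} (hS : S.IsTree) (hT : T.IsTree) (f : S →g T)
    (hf : Function.Injective f) : Nonempty (S ≃g T) := by
  classical
  have := Fintype.ofFinite V
  refine SimpleGraph.nonempty_iso_of_bijective_of_card_edgeFinset_eq f
    (Finite.injective_iff_bijective.mp hf) ?_
  have hS' := hS.card_edgeFinset
  have hT' := hT.card_edgeFinset
  omega

lemma DvalR_congr_iso {k m : ℕ} (σ : SimpleGraph (Fin k)) (ℓ : Fin k → ℕ)
    {S T : SimpleGraph (Fin m)} (ψ : S ≃g T) : DvalR σ ℓ S = DvalR σ ℓ T := by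
  refine Fintype.sum_equiv ((Equiv.refl _).arrowCongr ψ.toEquiv) _ _ fun φ => ?_
  have hcomp : (Equiv.refl _).arrowCongr ψ.toEquiv φ = ψ ∘ φ := rfl
  simp only [hcomp, Function.comp_apply, ψ.injective.of_comp_iff, ψ.map_adj_iff, deg_iso]

lemma DvalR_eq_zero_of_forall_not_injective {k m : ℕ} (σ : SimpleGraph (Fin k))
    (ℓ : Fin k → ℕ) (T : SimpleGraph (Fin m))
    (h : ∀ f : σ →g T, ¬ Function.Injective f) : DvalR σ ℓ T = 0 :=
  sum_eq_zero fun φ _ => if_neg fun ⟨hinj, hadj⟩ => h ⟨φ, hadj _ _⟩ hinj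

lemma DvalR_self_pos {k : ℕ} (σ : SimpleGraph (Fin k)) : 0 < DvalR σ (deg σ) σ := by
  refine sum_pos' (fun φ _ => ?_) ⟨id, mem_univ _, ?_⟩
  · split_ifs
    · positivity
    · rfl
  · rw [if_pos ⟨Function.injective_id, fun _ _ h => h⟩]
    refine prod_pos fun u _ => ?_
    rw [id, Nat.descFactorial_self]
    positivity

/-- Let `S` be a finite tree and let `τ` be the decorated tree whose underlying tree is `S` and
whose label at each vertex `u` is `ℓ(u) = deg_S(u)`. Then `D_τ(S) > 0`, for every tree `T` with
`|T| = |S|` not isomorphic to `S` one has `D_τ(T) = 0`, and consequently, for every tree `T`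
with `|T| = |S|`, `D_τ(T) = D_τ(S) · 1_{T ≅ S}`. -/
theorem degree_decorated_tree_detects_seed
    {m : ℕ} (S : SimpleGraph (Fin m)) (hS : S.IsTree) :
    0 < DvalR S (fun u => deg S u) S ∧
    (∀ T : SimpleGraph (Fin m), T.IsTree → ¬ Nonempty (S ≃g T) →
      DvalR S (fun u => deg S u) T = 0) ∧
    ∀ T : SimpleGraph (Fin m), T.IsTree →
      DvalR S (fun u => deg S u) T =
        DvalR S (fun u => deg S u) S * (if Nonempty (S ≃g T) then 1 else 0) := by
  have hzero : ∀ T : SimpleGraph (Fin m), T.IsTree → ¬ Nonempty (S ≃g T) →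
      DvalR S (fun u => deg S u) T = 0 := fun T hT hST =>
    DvalR_eq_zero_of_forall_not_injective _ _ _ fun f hf =>
      hST (hS.nonempty_iso_of_injective hT f hf)
  refine ⟨DvalR_self_pos S, hzero, fun T hT => ?_⟩
  split_ifs with hST
  · obtain ⟨ψ⟩ := hST
    rw [mul_one, DvalR_congr_iso _ _ ψ]
  · rw [mul_zero, hzero T hT hST]

end LPAM
end
end
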